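/- The bracket {f,g} = (d₊f, d₋g) on smooth functions of a generalized complex manifold M is skew-symmetric and satisfies the Leibniz rule in each argument. -/
import Mathlib


/-- An abstract Cartan calculus modelling the smooth functions `R = C^∞(M)`,
vector fields `X = Γ(TM)` (with their Lie bracket), and 1-forms `Ω = Ω¹(M)`
with the duality pairing, the de Rham differential on functions and the Lie
derivative on 1-forms, together with their standard identities. -/
structure CartanCalc (R X Ω : Type) [CommRing R] [AddCommGroup X] [Module R X]
    [LieRing X] [AddCommGroup Ω] [Module R Ω] where
  /-- action of a vector field on a function -/
  act : X → R → R
  act_add_left : ∀ x y f, act (x + y) f = act x f + act y f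
  act_smul_left : ∀ (g : R) (x : X) (f : R), act (g • x) f = g * act x f
  act_add_right : ∀ x f g, act x (f + g) = act x f + act x g
  act_mul : ∀ x f g, act x (f * g) = f * act x g + g * act x f
  act_bracket : ∀ x y f, act ⁅x, y⁆ f = act x (act y f) - act y (act x f)
  leibniz_bracket : ∀ (x : X) (f : R) (y : X), ⁅x, f • y⁆ = f • ⁅x, y⁆ + act x f • y
  /-- the duality pairing between 1-forms and vector fields -/
  pair : Ω →ₗ[R] X →ₗ[R] R
  pair_sep : ∀ ω : Ω, (∀ x, pair ω x = 0) → ω = 0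
  /-- the de Rham differential on functions -/
  d : R → Ω
  d_add : ∀ f g, d (f + g) = d f + d g
  d_mul : ∀ f g, d (f * g) = f • d g + g • d f
  pair_d : ∀ f x, pair (d f) x = act x f
  /-- the Lie derivative on 1-forms -/
  lie : X → Ω → Ω
  lie_pair : ∀ x ω y, pair (lie x ω) y = act x (pair ω y) - pair ω ⁅x, y⁆

variable {R X Ω : Type} [CommRing R] [AddCommGroup X] [Module R X]
  [LieRing X] [AddCommGroup Ω] [Module R Ω]

/-- The canonical pairing `(X+ξ, Y+η) = ξ(Y) + η(X)` on `TM ⊕ T*M`. -/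
def cpair (C : CartanCalc R X Ω) (a b : X × Ω) : R :=
  C.pair a.2 b.1 + C.pair b.2 a.1

variable [Algebra ℂ R]

/-- The (complexified) Courant bracket. -/
noncomputable def courant (C : CartanCalc R X Ω) (a b : X × Ω) : X × Ω :=
  (⁅a.1, b.1⁆,
    C.lie a.1 b.2 - C.lie b.1 a.2 -
      algebraMap ℂ R (1/2) • C.d (C.pair b.2 a.1 - C.pair a.2 b.1))

/-- The projection `pr₊ = ½(1 − iJ)` onto the `+i`-eigenbundle `L₊`. -/
noncomputable def prPlus (J : (X × Ω) →ₗ[R] (X × Ω)) (v : X × Ω) : X × Ω :=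
  algebraMap ℂ R (1/2) • (v - algebraMap ℂ R Complex.I • J v)

/-- The projection `pr₋ = ½(1 + iJ)` onto the `−i`-eigenbundle `L₋`. -/
noncomputable def prMinus (J : (X × Ω) →ₗ[R] (X × Ω)) (v : X × Ω) : X × Ω :=
  algebraMap ℂ R (1/2) • (v + algebraMap ℂ R Complex.I • J v)

/-- `d₊f = pr₋(0, df) ∈ L₋ ≅ L₊*`. -/
noncomputable def dPlus (C : CartanCalc R X Ω) (J : (X × Ω) →ₗ[R] (X × Ω)) (f : R) :
    X × Ω := prMinus J ((0 : X), C.d f)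

/-- `d₋f = pr₊(0, df) ∈ L₊ ≅ L₋*`. -/
noncomputable def dMinus (C : CartanCalc R X Ω) (J : (X × Ω) →ₗ[R] (X × Ω)) (f : R) :
    X × Ω := prPlus J ((0 : X), C.d f)

/-- The bracket `{f, g} = (d₊f, d₋g)`. -/
noncomputable def poissonBr (C : CartanCalc R X Ω) (J : (X × Ω) →ₗ[R] (X × Ω))
    (f g : R) : R := cpair C (dPlus C J f) (dMinus C J g)

section Aux

variable (C : CartanCalc R X Ω)

lemma cpair_comm (a b : X × Ω) : cpair C a b = cpair C b a := by
  simp [cpair, add_comm]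

lemma cpair_add_left (a a' b : X × Ω) :
    cpair C (a + a') b = cpair C a b + cpair C a' b := by
  simp [cpair]; ring

lemma cpair_add_right (a b b' : X × Ω) :
    cpair C a (b + b') = cpair C a b + cpair C a b' := by
  simp [cpair]; ring

lemma cpair_sub_right (a b b' : X × Ω) :
    cpair C a (b - b') = cpair C a b - cpair C a b' := by
  simp [cpair]; ring

lemma cpair_smul_left (r : R) (a b : X × Ω) :
    cpair C (r • a) b = r * cpair C a b := by
  simp [cpair, smul_eq_mul]; ring

lemma cpair_smul_right (r : R) (a b : X × Ω) :
    cpair C a (r • b) = r * cpair C a b := by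
  simp [cpair, smul_eq_mul]; ring

lemma cpair_neg_right (a b : X × Ω) : cpair C a (-b) = - cpair C a b := by
  simp [cpair]; ring

lemma cpair_zero_zero (ω τ : Ω) :
    cpair C ((0 : X), ω) ((0 : X), τ) = 0 := by
  simp [cpair]

lemma cpair_J_skew (J : (X × Ω) →ₗ[R] (X × Ω)) (hJ2 : ∀ v, J (J v) = -v)
    (horth : ∀ a b, cpair C (J a) (J b) = cpair C a b) (a b : X × Ω) :
    cpair C a (J b) = - cpair C (J a) b := by
  have h := horth a (J b)
  rw [hJ2, cpair_neg_right] at h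
  exact h.symm

lemma prod_zero_smul (p q : R) (ω τ : Ω) :
    (((0 : X), p • ω + q • τ) : X × Ω)
      = p • (((0 : X), ω) : X × Ω) + q • (((0 : X), τ) : X × Ω) := by
  ext <;> simp

lemma poissonBr_eq (J : (X × Ω) →ₗ[R] (X × Ω)) (hJ2 : ∀ v, J (J v) = -v)
    (horth : ∀ a b, cpair C (J a) (J b) = cpair C a b) (f g : R) :
    poissonBr C J f g
      = algebraMap ℂ R (1/2) * (algebraMap ℂ R Complex.I
          * cpair C (J ((0 : X), C.d f)) ((0 : X), C.d g)) := by
  set i := algebraMap ℂ R Complex.I with hi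
  set c := algebraMap ℂ R (1/2) with hc
  set a : X × Ω := ((0 : X), C.d f) with ha
  set b : X × Ω := ((0 : X), C.d g) with hb
  have h2 : c * 2 = 1 := by
    rw [hc, show (2 : R) = algebraMap ℂ R 2 from (map_ofNat _ 2).symm, ← map_mul]
    norm_num
  have h0 : cpair C a b = 0 := cpair_zero_zero C _ _
  have hJJ : cpair C (J a) (J b) = 0 := by rw [horth, h0]
  have hab : cpair C a (J b) = - cpair C (J a) b := cpair_J_skew C J hJ2 horth a b
  show cpair C (c • (a + i • J a)) (c • (b - i • J b)) = c * (i * cpair C (J a) b)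
  simp only [cpair_smul_left, cpair_smul_right, cpair_sub_right, cpair_add_left,
    h0, hJJ, hab]
  linear_combination (c * i * cpair C (J a) b) * h2

end Aux

/-! STATEMENT 9: the bracket `{f, g} = (d₊f, d₋g)` on smooth functions of a
generalized complex manifold is skew-symmetric and satisfies the Leibniz rule
in each argument. -/
theorem poisson_bracket_skew_and_leibniz
    (C : CartanCalc R X Ω)
    (J : (X × Ω) →ₗ[R] (X × Ω))
    (hJ2 : ∀ v, J (J v) = -v)
    (horth : ∀ a b, cpair C (J a) (J b) = cpair C a b)
    (hintp : ∀ a b, J a = algebraMap ℂ R Complex.I • a →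
      J b = algebraMap ℂ R Complex.I • b →
      J (courant C a b) = algebraMap ℂ R Complex.I • courant C a b)
    (hintm : ∀ a b, J a = algebraMap ℂ R (-Complex.I) • a →
      J b = algebraMap ℂ R (-Complex.I) • b →
      J (courant C a b) = algebraMap ℂ R (-Complex.I) • courant C a b) :
    (∀ f g, poissonBr C J f g = - poissonBr C J g f) ∧
    (∀ f g h, poissonBr C J f (g * h)
        = g * poissonBr C J f h + h * poissonBr C J f g) ∧
    (∀ f g h, poissonBr C J (f * g) h
        = f * poissonBr C J g h + g * poissonBr C J f h) := by
  have key := poissonBr_eq C J hJ2 horth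
  refine ⟨?_, ?_, ?_⟩
  · intro f g
    rw [key, key]
    have h1 : cpair C (J ((0 : X), C.d g)) ((0 : X), C.d f)
        = - cpair C (J ((0 : X), C.d f)) ((0 : X), C.d g) := by
      rw [cpair_comm, cpair_J_skew C J hJ2 horth]
    rw [h1]; ring
  · intro f g h
    rw [key, key, key, C.d_mul]
    rw [prod_zero_smul, cpair_add_right, cpair_smul_right, cpair_smul_right]
    ring
  · intro f g h
    rw [key, key, key, C.d_mul]
    rw [prod_zero_smul, map_add, map_smul, map_smul,
      cpair_add_left, cpair_smul_left, cpair_smul_left]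
    ring
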